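/- arXiv:2010.10309 — 6 statements merged into one kernel-verified Lean document; each statement's English description precedes it below -/
import Mathlib

section
/- For every k ≥ 2, the k-equal-representation shortlisting rule is non-wasteful: for every shortlisting instance I = ⟨ℙ, c, B⟩ and every shortlisting profile P, either c(R(I,P)) ≥ B or R(I,P) = ⋃P. -/
open Finset

namespace PB

open scoped Classical

/-- An approval/shortlisting profile for `n` agents: each agent contributes a
finite set of (indices of) projects. Projects are identified with their indices. -/
abbrev Profile (n : ℕ) := Fin n → Finset ℕ

/-- The union `⋃ P` of all proposals in a profile. -/
def unionP {n : ℕ} (P : Profile n) : Finset ℕ := Finset.univ.sup P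

/-- Encoding of a finite set of projects; a set is lexicographically preferred
(amongst the projects on which two sets differ, the one with the lowest index
belongs to the preferred set) iff its encoding is larger. -/
noncomputable def enc (P : Finset ℕ) : ℚ := P.sum fun i => (1 / 2 : ℚ) ^ i

/-- The canonical tie-breaking rule `T` on a family of sets of projects:
the (unique) lexicographically first set of the family. -/
noncomputable def Tfam (𝔓 : Finset (Finset ℕ)) : Finset ℕ :=
  if h : ∃ P ∈ 𝔓, ∀ Q ∈ 𝔓, enc Q ≤ enc P then h.choose else ∅

/-- The `r`-least element of a finite set of projects (`r` read as "strictly before"). -/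
noncomputable def first (r : ℕ → ℕ → Prop) (P : Finset ℕ) : ℕ :=
  if h : ∃ p ∈ P, ∀ q ∈ P, q ≠ p → r p q then h.choose else 0

/-- The canonical tie-breaking rule `T` on a nonempty set of projects: least index. -/
noncomputable def Tproj (P : Finset ℕ) : ℕ := first (· < ·) P

noncomputable def greedyAux (c : ℕ → ℕ) (r : ℕ → ℕ → Prop) : ℕ → Finset ℕ → ℕ → Finset ℕ
  | 0, _, _ => ∅
  | fuel + 1, P, b =>
    if P.Nonempty then
      if c (first r P) ≤ b then
        insert (first r P) (greedyAux c r fuel (P.erase (first r P)) (b - c (first r P)))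
      else greedyAux c r fuel (P.erase (first r P)) b
    else ∅

/-- Greedy selection: examine the projects of `P` following the strict order `r`,
selecting a project iff doing so keeps the total cost within the budget `B`. -/
noncomputable def GREED (c : ℕ → ℕ) (B : ℕ) (P : Finset ℕ) (r : ℕ → ℕ → Prop) : Finset ℕ :=
  greedyAux c r P.card P B

/-- A shortlisting rule: for every number `n` of agents, cost function, budget
limit, universe `ℙ` of projects and shortlisting profile, a shortlist. -/
abbrev ShortRule := ∀ n : ℕ, (ℕ → ℕ) → ℕ → Finset ℕ → Profile n → Finset ℕ

/-- An allocation rule: for every number `n` of agents, cost function, budget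
limit, set `Sh` of shortlisted projects and approval profile, a budget allocation. -/
abbrev AllocRule := ∀ n : ℕ, (ℕ → ℕ) → ℕ → Finset ℕ → Profile n → Finset ℕ

/-- A shortlisting rule must return a subset of the union of the proposals. -/
def IsShortRule (R : ShortRule) : Prop :=
  ∀ (n : ℕ) (c : ℕ → ℕ) (B : ℕ) (ℙ : Finset ℕ) (P : Profile n),
    (∀ j, P j ⊆ ℙ) → R n c B ℙ P ⊆ unionP P

/-- An allocation rule must return a feasible budget allocation. -/
def IsAllocRule (F : AllocRule) : Prop :=
  ∀ (n : ℕ) (c : ℕ → ℕ) (B : ℕ) (Sh : Finset ℕ) (A : Profile n),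
    (∀ j, A j ⊆ Sh) → F n c B Sh A ⊆ Sh ∧ (F n c B Sh A).sum c ≤ B

/-- The nomination shortlisting rule. -/
def nomination : ShortRule := fun _ _ _ _ P => unionP P

/-- Non-wastefulness of a shortlisting rule. -/
def NonWasteful (R : ShortRule) : Prop :=
  ∀ (n : ℕ) (c : ℕ → ℕ) (B : ℕ) (ℙ : Finset ℕ) (P : Profile n),
    (∀ p ∈ ℙ, c p ≤ B) → (∀ j, P j ⊆ ℙ) →
    B ≤ (R n c B ℙ P).sum c ∨ R n c B ℙ P = unionP P

/-- A shortlist `S` is representatively dominated (given instance and profile). -/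
def RepDominated {n : ℕ} (c : ℕ → ℕ) (ℙ : Finset ℕ) (P : Profile n) (S : Finset ℕ) : Prop :=
  ∃ S' ⊆ ℙ, S'.sum c ≤ S.sum c ∧
    (∀ i, (S ∩ P i).card ≤ (S' ∩ P i).card) ∧ ∃ i, (S ∩ P i).card < (S' ∩ P i).card

/-- Representation efficiency of a shortlisting rule. -/
def RepEfficient (R : ShortRule) : Prop :=
  ∀ (n : ℕ) (c : ℕ → ℕ) (B : ℕ) (ℙ : Finset ℕ) (P : Profile n),
    (∀ p ∈ ℙ, c p ≤ B) → (∀ j, P j ⊆ ℙ) →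
    ¬ RepDominated c ℙ P (R n c B ℙ P)

/-- The representation score `Σ_i Σ_{ℓ=0}^{|P_i ∩ S|} (1/n)^ℓ`. -/
noncomputable def reprScore (n : ℕ) (P : Profile n) (S : Finset ℕ) : ℚ :=
  ∑ i, ∑ l ∈ Finset.range ((P i ∩ S).card + 1), (1 / (n : ℚ)) ^ l

/-- The `k`-equal-representation shortlisting rule. -/
noncomputable def equalRepr (k : ℕ) : ShortRule := fun n c B _ P =>
  Tfam (((unionP P).powerset).filter fun S =>
    S.sum c ≤ k * B ∧
    ∀ S' ∈ (unionP P).powerset, S'.sum c ≤ k * B → reprScore n P S' ≤ reprScore n P S)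

/-- The geometric median of a set of projects w.r.t. a distance `δ`. -/
noncomputable def med (δ : ℕ → ℕ → ℝ) (V : Finset ℕ) : ℕ :=
  Tproj (V.filter fun p => ∀ q ∈ V, V.sum (fun x => δ p x) ≤ V.sum (fun x => δ q x))

def IsPartition (V : Finset (Finset ℕ)) (P : Finset ℕ) : Prop :=
  (∀ v ∈ V, v.Nonempty) ∧ V.sup id = P ∧ ∀ v ∈ V, ∀ w ∈ V, v ≠ w → Disjoint v w

/-- `(k, ℓ)`-Voronoï partitions w.r.t. `δ`. -/
def IsVoronoi (δ : ℕ → ℕ → ℝ) (c : ℕ → ℕ) (B k : ℕ) (ℓ : ℝ)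
    (V : Finset (Finset ℕ)) (P : Finset ℕ) : Prop :=
  IsPartition V P ∧ (V.sum fun v => c (med δ v)) ≤ k * B ∧
  ∀ v ∈ V, ∀ p ∈ v,
    (∀ w ∈ V, w ≠ v → δ p (med δ v) ≤ δ p (med δ w)) ∧ δ p (med δ v) ≤ ℓ

/-- The smallest `ℓ` such that a `(k, ℓ)`-Voronoï partition of `P` exists. -/
noncomputable def lstar (δ : ℕ → ℕ → ℝ) (c : ℕ → ℕ) (B k : ℕ) (P : Finset ℕ) : ℝ :=
  sInf {ℓ : ℝ | ∃ V : Finset (Finset ℕ), IsVoronoi δ c B k ℓ V P}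

/-- The `k`-median shortlisting rule w.r.t. the distance `δ`. -/
noncomputable def kMedian (δ : ℕ → ℕ → ℝ) (k : ℕ) : ShortRule := fun _ c B _ P =>
  Tfam ((((unionP P).powerset.powerset).filter fun V =>
    IsVoronoi δ c B k (lstar δ c B k (unionP P)) V (unionP P)).image fun V => V.image (med δ))

/-- `δ` is a metric (on the universe of conceivable projects). -/
def IsMetric (δ : ℕ → ℕ → ℝ) : Prop :=
  (∀ p q, δ p q = 0 ↔ p = q) ∧ (∀ p q, δ p q = δ q p) ∧ ∀ p q r, δ p r ≤ δ p q + δ q r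

/-- The approval score of project `p` in profile `A`. -/
def appScore {n : ℕ} (A : Profile n) (p : ℕ) : ℕ :=
  (Finset.univ.filter fun i => p ∈ A i).card

/-- The greedy-approval allocation rule. -/
noncomputable def greedyApproval : AllocRule := fun _ c B Sh A =>
  GREED c B Sh fun p q => appScore A q < appScore A p ∨ (appScore A p = appScore A q ∧ p < q)

/-- The approval-maximising allocation rule (canonical tie-breaking). -/
noncomputable def approvalMax : AllocRule := fun _ c B Sh A =>
  Tfam ((Sh.powerset).filter fun S =>
    S.sum c ≤ B ∧ ∀ S' ∈ Sh.powerset, S'.sum c ≤ B → S'.sum (appScore A) ≤ S.sum (appScore A))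

/-- `A` is an exhaustive budget allocation for the instance `⟨Sh, c, B⟩`. -/
def ExhaustiveAlloc (c : ℕ → ℕ) (B : ℕ) (Sh A : Finset ℕ) : Prop :=
  A ⊆ Sh ∧ A.sum c ≤ B ∧ ∀ p ∈ Sh, p ∉ A → ¬ (A.sum c + c p ≤ B)

/-- An allocation rule is exhaustive if it always returns an exhaustive allocation. -/
def ExhaustiveRule (F : AllocRule) : Prop :=
  ∀ (n : ℕ) (c : ℕ → ℕ) (B : ℕ) (Sh : Finset ℕ) (A : Profile n),
    (∀ j, A j ⊆ Sh) → ExhaustiveAlloc c B Sh (F n c B Sh A)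

/-- Unanimity of an allocation rule. -/
def Unanimous (F : AllocRule) : Prop :=
  ∀ (n : ℕ) (c : ℕ → ℕ) (B : ℕ) (Sh : Finset ℕ) (a : Finset ℕ),
    a ⊆ Sh → a.sum c ≤ B → a ⊆ F n c B Sh (fun _ => a)

/-- Strong unanimity of an allocation rule. -/
def StronglyUnanimous (F : AllocRule) : Prop :=
  ∀ (n : ℕ) (c : ℕ → ℕ) (B : ℕ) (Sh : Finset ℕ) (i : Fin n) (a : Finset ℕ) (A : Profile n),
    3 ≤ n → a ⊆ Sh → a.sum c ≤ B → (∀ j, j ≠ i → A j = a) → a ⊆ F n c B Sh A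

/-- A preference model: given the cost function and an ideal set, the utility
of a budget allocation.  `overlapU` and `costU` are the two models used. -/
abbrev PrefModel := (ℕ → ℕ) → Finset ℕ → Finset ℕ → ℕ

def overlapU : PrefModel := fun _ P A => (A ∩ P).card
def costU : PrefModel := fun c P A => (A ∩ P).sum c

/-- Budget allocations reachable by agent `i` by changing her own ballot. -/
noncomputable def reachable (n : ℕ) (c : ℕ → ℕ) (B : ℕ) (F : AllocRule)
    (Sh : Finset ℕ) (A : Profile n) (i : Fin n) : Finset (Finset ℕ) :=
  (Sh.powerset).image fun b => F n c B Sh (Function.update A i b)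

/-- The best response `A*_i(I, A, F)` of agent `i` (with preference order `r`). -/
noncomputable def Astar (U : PrefModel) (n : ℕ) (c : ℕ → ℕ) (B : ℕ) (F : AllocRule)
    (r : ℕ → ℕ → Prop) (Sh : Finset ℕ) (A : Profile n) (i : Fin n) : Finset ℕ :=
  Tfam ((reachable n c B F Sh A i).filter fun X =>
    ∀ Y ∈ reachable n c B F Sh A i, U c (GREED c B Sh r) Y ≤ U c (GREED c B Sh r) X)

/-- `F*(I, A)`: the outcome after agent `i` best-responds to profile `A`. -/
noncomputable def Fstar (U : PrefModel) (n : ℕ) (c : ℕ → ℕ) (B : ℕ) (F : AllocRule)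
    (r : ℕ → ℕ → Prop) (Sh : Finset ℕ) (A : Profile n) (i : Fin n) : Finset ℕ :=
  F n c B Sh (Function.update A i (Astar U n c B F r Sh A i))

/-- `Pi'` is a successful pessimistic manipulation for agent `i` (base profile `P`). -/
def SuccPess (U : PrefModel) (R : ShortRule) (F : AllocRule) (n : ℕ) (c : ℕ → ℕ) (B : ℕ)
    (ℙ : Finset ℕ) (prefs : Fin n → ℕ → ℕ → Prop) (P : Profile n) (i : Fin n)
    (Pi' : Finset ℕ) : Prop :=
  let Sh := R n c B ℙ P
  let Sh' := R n c B ℙ (Function.update P i Pi')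
  let tp := GREED c B (Sh ∪ Sh') (prefs i)
  (∀ A A' : Profile n, (∀ j, A j ⊆ Sh) → (∀ j, A' j ⊆ Sh') →
      U c tp (Fstar U n c B F (prefs i) Sh A i) ≤ U c tp (Fstar U n c B F (prefs i) Sh' A' i)) ∧
  ∃ A A' : Profile n, (∀ j, A j ⊆ Sh) ∧ (∀ j, A' j ⊆ Sh') ∧
      U c tp (Fstar U n c B F (prefs i) Sh A i) < U c tp (Fstar U n c B F (prefs i) Sh' A' i)

/-- `Pi'` is a successful optimistic manipulation for agent `i` (base profile `P`). -/
def SuccOpt (U : PrefModel) (R : ShortRule) (F : AllocRule) (n : ℕ) (c : ℕ → ℕ) (B : ℕ)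
    (ℙ : Finset ℕ) (prefs : Fin n → ℕ → ℕ → Prop) (P : Profile n) (i : Fin n)
    (Pi' : Finset ℕ) : Prop :=
  let Sh := R n c B ℙ P
  let Sh' := R n c B ℙ (Function.update P i Pi')
  let tp := GREED c B (Sh ∪ Sh') (prefs i)
  ∃ A A' : Profile n, (∀ j, A j ⊆ Sh) ∧ (∀ j, A' j ⊆ Sh') ∧
      U c tp (Fstar U n c B F (prefs i) Sh A i) < U c tp (Fstar U n c B F (prefs i) Sh' A' i)

/-- `Pi'` is a successful anticipative manipulation for agent `i` (base profile `P`). -/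
def SuccAnt (U : PrefModel) (R : ShortRule) (F : AllocRule) (n : ℕ) (c : ℕ → ℕ) (B : ℕ)
    (ℙ : Finset ℕ) (prefs : Fin n → ℕ → ℕ → Prop) (P : Profile n) (i : Fin n)
    (Pi' : Finset ℕ) : Prop :=
  let Sh := R n c B ℙ P
  let Sh' := R n c B ℙ (Function.update P i Pi')
  let tp := GREED c B (Sh ∪ Sh') (prefs i)
  U c tp (Fstar U n c B F (prefs i) Sh (fun j => GREED c B Sh (prefs j)) i)
    < U c tp (Fstar U n c B F (prefs i) Sh' (fun j => GREED c B Sh' (prefs j)) i)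

section FSSP

variable (U : PrefModel) (R : ShortRule) (F : AllocRule)

/-- First-stage strategyproofness, awareness-restricted, pessimistic. -/
def R_FSSP_P : Prop :=
  ∀ (n : ℕ) (c : ℕ → ℕ) (B : ℕ) (ℙ : Finset ℕ) (prefs : Fin n → ℕ → ℕ → Prop)
    (C P : Profile n) (i : Fin n) (Pi' : Finset ℕ),
    (∀ p ∈ ℙ, c p ≤ B) → (∀ j, IsStrictTotalOrder ℕ (prefs j)) →
    (∀ j, C j ⊆ ℙ) → (∀ j, P j ⊆ C j) → Pi' ⊆ C i →
    ¬ SuccPess U R F n c B ℙ prefs (Function.update P i (GREED c B (C i) (prefs i))) i Pi'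

/-- First-stage strategyproofness, awareness-restricted, optimistic. -/
def R_FSSP_O : Prop :=
  ∀ (n : ℕ) (c : ℕ → ℕ) (B : ℕ) (ℙ : Finset ℕ) (prefs : Fin n → ℕ → ℕ → Prop)
    (C P : Profile n) (i : Fin n) (Pi' : Finset ℕ),
    (∀ p ∈ ℙ, c p ≤ B) → (∀ j, IsStrictTotalOrder ℕ (prefs j)) →
    (∀ j, C j ⊆ ℙ) → (∀ j, P j ⊆ C j) → Pi' ⊆ C i →
    ¬ SuccOpt U R F n c B ℙ prefs (Function.update P i (GREED c B (C i) (prefs i))) i Pi'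

/-- First-stage strategyproofness, awareness-restricted, anticipative. -/
def R_FSSP_A : Prop :=
  ∀ (n : ℕ) (c : ℕ → ℕ) (B : ℕ) (ℙ : Finset ℕ) (prefs : Fin n → ℕ → ℕ → Prop)
    (C P : Profile n) (i : Fin n) (Pi' : Finset ℕ),
    (∀ p ∈ ℙ, c p ≤ B) → (∀ j, IsStrictTotalOrder ℕ (prefs j)) →
    (∀ j, C j ⊆ ℙ) → (∀ j, P j ⊆ C j) → Pi' ⊆ C i →
    ¬ SuccAnt U R F n c B ℙ prefs (Function.update P i (GREED c B (C i) (prefs i))) i Pi'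

/-- First-stage strategyproofness, unrestricted, pessimistic. -/
def U_FSSP_P : Prop :=
  ∀ (n : ℕ) (c : ℕ → ℕ) (B : ℕ) (ℙ : Finset ℕ) (prefs : Fin n → ℕ → ℕ → Prop)
    (C P : Profile n) (i : Fin n) (Pi' : Finset ℕ),
    (∀ p ∈ ℙ, c p ≤ B) → (∀ j, IsStrictTotalOrder ℕ (prefs j)) →
    (∀ j, C j ⊆ ℙ) → (∀ j, P j ⊆ C j) → Pi' ⊆ C i ∪ unionP P →
    ¬ SuccPess U R F n c B ℙ prefs
        (Function.update P i (GREED c B (C i ∪ unionP P) (prefs i))) i Pi'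

/-- First-stage strategyproofness, unrestricted, optimistic. -/
def U_FSSP_O : Prop :=
  ∀ (n : ℕ) (c : ℕ → ℕ) (B : ℕ) (ℙ : Finset ℕ) (prefs : Fin n → ℕ → ℕ → Prop)
    (C P : Profile n) (i : Fin n) (Pi' : Finset ℕ),
    (∀ p ∈ ℙ, c p ≤ B) → (∀ j, IsStrictTotalOrder ℕ (prefs j)) →
    (∀ j, C j ⊆ ℙ) → (∀ j, P j ⊆ C j) → Pi' ⊆ C i ∪ unionP P →
    ¬ SuccOpt U R F n c B ℙ prefs
        (Function.update P i (GREED c B (C i ∪ unionP P) (prefs i))) i Pi'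

/-- First-stage strategyproofness, unrestricted, anticipative. -/
def U_FSSP_A : Prop :=
  ∀ (n : ℕ) (c : ℕ → ℕ) (B : ℕ) (ℙ : Finset ℕ) (prefs : Fin n → ℕ → ℕ → Prop)
    (C P : Profile n) (i : Fin n) (Pi' : Finset ℕ),
    (∀ p ∈ ℙ, c p ≤ B) → (∀ j, IsStrictTotalOrder ℕ (prefs j)) →
    (∀ j, C j ⊆ ℙ) → (∀ j, P j ⊆ C j) → Pi' ⊆ C i ∪ unionP P →
    ¬ SuccAnt U R F n c B ℙ prefs
        (Function.update P i (GREED c B (C i ∪ unionP P) (prefs i))) i Pi'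

end FSSP

/-! If the shortlist `S` costs less than `B` and misses a proposed project `p`, then `S ∪ {p}`
costs less than `2B ≤ kB` (as `c p ≤ B`) and strictly raises the score of an agent proposing
`p`, contradicting the maximality of `S`. -/

lemma Tfam_mem {𝔓 : Finset (Finset ℕ)} (h : 𝔓.Nonempty) : Tfam 𝔓 ∈ 𝔓 := by
  obtain ⟨P, hP, hmax⟩ := 𝔓.exists_max_image enc h
  have hex : ∃ P ∈ 𝔓, ∀ Q ∈ 𝔓, enc Q ≤ enc P := ⟨P, hP, hmax⟩
  rw [Tfam, dif_pos hex]
  exact hex.choose_spec.1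

lemma sum_range_pow_mono {q : ℚ} (hq : 0 ≤ q) {a b : ℕ} (hab : a ≤ b) :
    ∑ l ∈ Finset.range a, q ^ l ≤ ∑ l ∈ Finset.range b, q ^ l :=
  Finset.sum_le_sum_of_subset_of_nonneg (Finset.range_subset_range.2 hab)
    fun l _ _ => pow_nonneg hq l

/-- A new project of agent `i` adds the positive term `(1/n)^(|P_i ∩ S| + 1)` to her partial
geometric sum. -/
lemma reprScore_lt_insert {n : ℕ} (P : Profile n) {S : Finset ℕ} {p : ℕ} {i : Fin n}
    (hpi : p ∈ P i) (hpS : p ∉ S) :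
    reprScore n P S < reprScore n P (insert p S) := by
  have hn : (0 : ℚ) < 1 / (n : ℚ) := by
    have : (0 : ℚ) < n := by exact_mod_cast i.pos
    positivity
  refine Finset.sum_lt_sum (fun j _ => ?_) ⟨i, Finset.mem_univ i, ?_⟩
  · exact sum_range_pow_mono hn.le <| Nat.succ_le_succ <|
      Finset.card_le_card (Finset.inter_subset_inter_left (Finset.subset_insert p S))
  · have hcard : (P i ∩ insert p S).card = (P i ∩ S).card + 1 := by
      rw [Finset.inter_insert_of_mem hpi,
        Finset.card_insert_of_notMem fun h => hpS (Finset.mem_inter.1 h).2]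
    rw [hcard, Finset.sum_range_succ _ ((P i ∩ S).card + 1)]
    exact lt_add_of_pos_right _ (pow_pos hn _)

lemma equalRepr_spec (k n : ℕ) (c : ℕ → ℕ) (B : ℕ) (ℙ : Finset ℕ) (P : Profile n) :
    equalRepr k n c B ℙ P ⊆ unionP P ∧ (equalRepr k n c B ℙ P).sum c ≤ k * B ∧
      ∀ S ⊆ unionP P, S.sum c ≤ k * B → reprScore n P S ≤ reprScore n P (equalRepr k n c B ℙ P) := by
  have hne : (((unionP P).powerset).filter fun S => S.sum c ≤ k * B).Nonempty :=
    ⟨∅, by simp⟩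
  obtain ⟨S₀, hS₀, hmax⟩ := Finset.exists_max_image _ (reprScore n P) hne
  rw [Finset.mem_filter] at hS₀
  have hmem : equalRepr k n c B ℙ P ∈ ((unionP P).powerset).filter fun S => S.sum c ≤ k * B ∧
      ∀ S' ∈ (unionP P).powerset, S'.sum c ≤ k * B → reprScore n P S' ≤ reprScore n P S :=
    Tfam_mem ⟨S₀, Finset.mem_filter.2 ⟨hS₀.1, hS₀.2,
      fun S hS hSc => hmax S (Finset.mem_filter.2 ⟨hS, hSc⟩)⟩⟩
  simp only [Finset.mem_filter, Finset.mem_powerset] at hmem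
  exact ⟨hmem.1, hmem.2.1, fun S hS => hmem.2.2 S hS⟩

/-- For every `k ≥ 2`, the `k`-equal-representation shortlisting
rule is non-wasteful. -/
theorem equalRepr_nonWasteful :
    ∀ k : ℕ, 2 ≤ k → NonWasteful (equalRepr k) := by
  intro k hk n c B ℙ P hcB hPℙ
  obtain ⟨hSU, -, hSmax⟩ := equalRepr_spec k n c B ℙ P
  set S := equalRepr k n c B ℙ P
  by_contra! hcon
  obtain ⟨hSB, hSne⟩ := hcon
  obtain ⟨p, hpU, hpS⟩ := Finset.exists_of_ssubset (hSU.ssubset_of_ne hSne)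
  obtain ⟨i, -, hpi⟩ := Finset.mem_sup.1 hpU
  have hcost : (insert p S).sum c ≤ k * B := by
    rw [Finset.sum_insert hpS]
    nlinarith [hcB p (hPℙ i hpi)]
  exact (reprScore_lt_insert P hpi hpS).not_ge
    (hSmax _ (Finset.insert_subset hpU hSU) hcost)

end PB
end

section
/- For every k ≥ 1, the k-equal-representation shortlisting rule is representatively efficient: its outcome is never representatively dominated. -/
open Finset

namespace PB

open scoped Classical

lemma subset_unionP {n : ℕ} (P : Profile n) (j : Fin n) : P j ⊆ unionP P :=
  Finset.le_sup (f := P) (Finset.mem_univ j)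

lemma inter_unionP_inter {n : ℕ} (P : Profile n) (S : Finset ℕ) (j : Fin n) :
    S ∩ unionP P ∩ P j = S ∩ P j := by
  rw [Finset.inter_assoc, Finset.inter_eq_right.mpr (subset_unionP P j)]

lemma strictMono_sum_range_pow {x : ℚ} (hx : 0 < x) :
    StrictMono fun a : ℕ => ∑ l ∈ range (a + 1), x ^ l :=
  strictMono_nat_of_lt_succ fun a => by
    simpa [Finset.sum_range_succ _ (a + 1)] using pow_pos hx (a + 1)

lemma reprScore_lt_of_card_inter_lt {n : ℕ} (P : Profile n) {S T : Finset ℕ}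
    (hle : ∀ i, (S ∩ P i).card ≤ (T ∩ P i).card) (hlt : ∃ i, (S ∩ P i).card < (T ∩ P i).card) :
    reprScore n P S < reprScore n P T := by
  obtain ⟨i, hi⟩ := hlt
  have hmono := strictMono_sum_range_pow (x := 1 / (n : ℚ)) (by simpa using i.pos)
  unfold reprScore
  simp only [Finset.inter_comm (P _)]
  exact Finset.sum_lt_sum (fun j _ => hmono.monotone (hle j)) ⟨i, Finset.mem_univ i, hmono hi⟩

lemma equalRepr_isOptimal (k n : ℕ) (c : ℕ → ℕ) (B : ℕ) (ℙ : Finset ℕ) (P : Profile n) :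
    (equalRepr k n c B ℙ P).sum c ≤ k * B ∧
      ∀ T ⊆ unionP P, T.sum c ≤ k * B → reprScore n P T ≤ reprScore n P (equalRepr k n c B ℙ P) := by
  have hfeas : ((unionP P).powerset.filter fun S => S.sum c ≤ k * B).Nonempty := ⟨∅, by simp⟩
  obtain ⟨S₀, hS₀, hmax⟩ := Finset.exists_max_image _ (reprScore n P) hfeas
  rw [Finset.mem_filter] at hS₀
  have hmem := Tfam_mem (𝔓 := ((unionP P).powerset).filter fun S =>
      S.sum c ≤ k * B ∧ ∀ S' ∈ (unionP P).powerset, S'.sum c ≤ k * B →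
        reprScore n P S' ≤ reprScore n P S)
    ⟨S₀, Finset.mem_filter.mpr
      ⟨hS₀.1, hS₀.2, fun S' hS' hc => hmax S' (Finset.mem_filter.mpr ⟨hS', hc⟩)⟩⟩
  obtain ⟨-, hcost, hopt⟩ := Finset.mem_filter.mp hmem
  exact ⟨hcost, fun T hT => hopt T (Finset.mem_powerset.mpr hT)⟩

/-- For every `k ≥ 1`, the `k`-equal-representation shortlisting
rule is representatively efficient. -/
theorem equalRepr_repEfficient :
    ∀ k : ℕ, 1 ≤ k → RepEfficient (equalRepr k) := by
  intro k _ n c B ℙ P _ _ ⟨S', _, hcost', hle, hlt⟩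
  obtain ⟨hcost, hopt⟩ := equalRepr_isOptimal k n c B ℙ P
  set T := S' ∩ unionP P
  have hT : reprScore n P T ≤ reprScore n P (equalRepr k n c B ℙ P) :=
    hopt T Finset.inter_subset_right <|
      (Finset.sum_le_sum_of_subset Finset.inter_subset_left).trans (hcost'.trans hcost)
  refine hT.not_gt (reprScore_lt_of_card_inter_lt P ?_ ?_)
  · simpa only [T, inter_unionP_inter] using hle
  · simpa only [T, inter_unionP_inter] using hlt

end PB
end

section
/- For every k ∈ ℕ, the k-median shortlisting rule is not representatively efficient: there exist a metric δ on the projects, a shortlisting instance I, and a shortlisting profile P such that the outcome of the k-median rule w.r.t. δ on (I, P) is representatively dominated. -/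
open Finset

namespace PB

open scoped Classical

/-!
Take `2k` projects of unit cost, grouped into the blocks `{2j, 2j+1}`, with distance `1` inside
a block and `2` across blocks. With budget `k` at most `k` cells are allowed, so the cells cannot
all be single points and `ℓ* = 1`; a cell within distance `1` of its median lies in one block, and counting
forces the cells to be exactly the blocks. Tie-breaking picks the even projects as medians. An agent
approving only project `1` is unrepresented, and exchanging `0` for `1` costs nothing extra and hurts
nobody when the only other agent approves every project.

For `k = 0` with a costly project `0` and a free project `1`, the cell containing `0` always has
median `0`, so no Voronoï partition exists, the rule returns `∅`, and `{1}` dominates it.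
-/

theorem Tproj_eq_min' {S : Finset ℕ} (hS : S.Nonempty) : Tproj S = S.min' hS := by
  have hex : ∃ p ∈ S, ∀ q ∈ S, q ≠ p → p < q :=
    ⟨S.min' hS, S.min'_mem hS, fun q hq hne => (S.min'_le q hq).lt_of_ne' hne⟩
  obtain ⟨hmem, hmin⟩ := hex.choose_spec
  rw [Tproj, first, dif_pos hex]
  by_contra hne
  exact (hmin _ (S.min'_mem hS) (Ne.symm hne)).not_ge (S.min'_le _ hmem)

theorem Tfam_singleton (A : Finset ℕ) : Tfam {A} = A := by
  have hex : ∃ P ∈ ({A} : Finset (Finset ℕ)), ∀ Q ∈ ({A} : Finset (Finset ℕ)), enc Q ≤ enc P :=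
    ⟨A, mem_singleton_self A, fun Q hQ => by rw [mem_singleton.mp hQ]⟩
  rw [Tfam, dif_pos hex]
  exact mem_singleton.mp hex.choose_spec.1

theorem Tfam_empty : Tfam ∅ = ∅ := by
  simp [Tfam]

theorem IsMetric.apply_self {δ : ℕ → ℕ → ℝ} (hδ : IsMetric δ) (p : ℕ) : δ p p = 0 :=
  (hδ.1 p p).2 rfl

theorem med_mem (δ : ℕ → ℕ → ℝ) {v : Finset ℕ} (hv : v.Nonempty) : med δ v ∈ v := by
  obtain ⟨p, hp, hmin⟩ := v.exists_min_image (fun p => v.sum (δ p)) hv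
  have hne : (v.filter fun p => ∀ q ∈ v, v.sum (δ p) ≤ v.sum (δ q)).Nonempty :=
    ⟨p, mem_filter.mpr ⟨hp, hmin⟩⟩
  rw [med, Tproj_eq_min' hne]
  exact (mem_filter.mp (min'_mem _ hne)).1

theorem med_eq_min'_of_sum_eq {δ : ℕ → ℕ → ℝ} {v : Finset ℕ} (hv : v.Nonempty)
    (h : ∀ p ∈ v, ∀ q ∈ v, v.sum (δ p) = v.sum (δ q)) : med δ v = v.min' hv := by
  rw [med, filter_true_of_mem fun p hp q hq => (h p hp q hq).le, Tproj_eq_min' hv]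

theorem med_pair {δ : ℕ → ℕ → ℝ} (hδ : IsMetric δ) {a b : ℕ} (hab : a < b) :
    med δ {a, b} = a := by
  have hsum : ∀ p ∈ ({a, b} : Finset ℕ), ({a, b} : Finset ℕ).sum (δ p) = δ a b := by
    simp only [mem_insert, mem_singleton, sum_pair hab.ne]
    rintro p (rfl | rfl)
    · rw [hδ.apply_self, zero_add]
    · rw [hδ.apply_self, add_zero, hδ.2.1]
  rw [med_eq_min'_of_sum_eq (insert_nonempty a {b})
    fun p hp q hq => (hsum p hp).trans (hsum q hq).symm]
  simp [hab.le]

namespace IsPartition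

variable {V : Finset (Finset ℕ)} {P : Finset ℕ}

theorem subset_of_mem (hV : IsPartition V P) {v : Finset ℕ} (hv : v ∈ V) : v ⊆ P :=
  hV.2.1 ▸ le_sup (f := id) hv

theorem exists_mem (hV : IsPartition V P) {p : ℕ} (hp : p ∈ P) : ∃ v ∈ V, p ∈ v :=
  mem_sup.mp (hV.2.1 ▸ hp)

theorem card_eq_sum_card (hV : IsPartition V P) : P.card = ∑ v ∈ V, v.card := by
  rw [← hV.2.1, sup_eq_biUnion]
  exact card_biUnion fun v hv w hw hvw => hV.2.2 v hv w hw hvw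

end IsPartition

namespace IsVoronoi

variable {δ : ℕ → ℕ → ℝ} {c : ℕ → ℕ} {B k : ℕ} {ℓ : ℝ} {V : Finset (Finset ℕ)} {P : Finset ℕ}

theorem card_le_of_unit_cost (hV : IsVoronoi δ (fun _ => 1) B k ℓ V P) : V.card ≤ k * B := by
  simpa using hV.2.1

theorem card_le_card_of_separated (hV : IsVoronoi δ c B k ℓ V P)
    (hsep : ∀ p ∈ P, ∀ q ∈ P, p ≠ q → ℓ < δ p q) : P.card ≤ V.card := by
  have hsingle : ∀ v ∈ V, v.card ≤ 1 := by
    intro v hv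
    have hmed := med_mem δ (hV.1.1 v hv)
    refine card_le_one.mpr fun p hp q hq => ?_
    have hcell : ∀ x ∈ v, x = med δ v := fun x hx => by
      by_contra hne
      exact (hV.2.2 v hv x hx).2.not_gt
        (hsep x (hV.1.subset_of_mem hv hx) _ (hV.1.subset_of_mem hv hmed) hne)
    rw [hcell p hp, hcell q hq]
  rw [hV.1.card_eq_sum_card, card_eq_sum_ones]
  exact sum_le_sum hsingle

end IsVoronoi

theorem kMedian_eq_of_isLeast {δ : ℕ → ℕ → ℝ} {k n : ℕ} {c : ℕ → ℕ} {B : ℕ} {ℙ : Finset ℕ}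
    {P : Profile n} {ℓ : ℝ} {M : Finset ℕ}
    (hℓ : IsLeast {ℓ : ℝ | ∃ V : Finset (Finset ℕ), IsVoronoi δ c B k ℓ V (unionP P)} ℓ)
    (hmed : ∀ V, IsVoronoi δ c B k ℓ V (unionP P) → V.image (med δ) = M) :
    kMedian δ k n c B ℙ P = M := by
  obtain ⟨V₀, hV₀⟩ := hℓ.1
  have hfam : (((unionP P).powerset.powerset).filter fun V =>
      IsVoronoi δ c B k (lstar δ c B k (unionP P)) V (unionP P)).image (fun V => V.image (med δ))
      = {M} := by
    rw [lstar, hℓ.csInf_eq]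
    refine eq_singleton_iff_unique_mem.mpr ⟨mem_image.mpr ⟨V₀, ?_, hmed V₀ hV₀⟩, ?_⟩
    · exact mem_filter.mpr ⟨mem_powerset.mpr fun v hv =>
        mem_powerset.mpr (hV₀.1.subset_of_mem hv), hV₀⟩
    · simp only [mem_image, mem_filter]
      rintro _ ⟨V, ⟨-, hV⟩, rfl⟩
      exact hmed V hV
  rw [kMedian, hfam, Tfam_singleton]

theorem kMedian_eq_empty {δ : ℕ → ℕ → ℝ} {k n : ℕ} {c : ℕ → ℕ} {B : ℕ} {ℙ : Finset ℕ}
    {P : Profile n} (h : ∀ ℓ V, ¬ IsVoronoi δ c B k ℓ V (unionP P)) :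
    kMedian δ k n c B ℙ P = ∅ := by
  rw [kMedian, filter_false_of_mem fun V _ => h _ V, image_empty, Tfam_empty]

section RepDominated

variable {n : ℕ} {c : ℕ → ℕ} {ℙ : Finset ℕ} {P : Profile n}

theorem repDominated_empty {b : ℕ} (hb : b ∈ ℙ) (hcb : c b = 0) {i : Fin n} (hi : b ∈ P i) :
    RepDominated c ℙ P ∅ :=
  ⟨{b}, singleton_subset_iff.mpr hb, by simp [hcb], fun _ => by simp, i, by simp [hi]⟩

theorem repDominated_of_swap {S : Finset ℕ} {a b : ℕ} (hS : S ⊆ ℙ) (ha : a ∈ S) (hb : b ∉ S)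
    (hbℙ : b ∈ ℙ) (hcost : c b ≤ c a) (hab : ∀ i, a ∈ P i → b ∈ P i)
    (hgain : ∃ i, b ∈ P i ∧ a ∉ P i) : RepDominated c ℙ P S := by
  have hb' : b ∉ S.erase a := fun h => hb (mem_of_mem_erase h)
  have hcard : ∀ i, b ∈ P i →
      (insert b (S.erase a) ∩ P i).card = ((S ∩ P i).erase a).card + 1 := fun i hi => by
    rw [insert_inter_of_mem hi, card_insert_of_notMem fun h => hb' (mem_inter.mp h).1, erase_inter]
  refine ⟨insert b (S.erase a), insert_subset hbℙ ((erase_subset a S).trans hS), ?_, ?_, ?_⟩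
  · rw [sum_insert hb', ← add_sum_erase S c ha]
    omega
  · intro i
    by_cases hi : b ∈ P i
    · rw [hcard i hi]
      have := pred_card_le_card_erase (s := S ∩ P i) (a := a)
      omega
    · have hai : a ∉ P i := fun h => hi (hab i h)
      rw [insert_inter_of_notMem hi, erase_inter,
        erase_eq_of_notMem fun h => hai (mem_inter.mp h).2]
  · obtain ⟨i, hbi, hai⟩ := hgain
    refine ⟨i, ?_⟩
    rw [hcard i hbi, erase_eq_of_notMem fun h => hai (mem_inter.mp h).2]
    exact Nat.lt_succ_self _

end RepDominated

def block (j : ℕ) : Finset ℕ := {2 * j, 2 * j + 1}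

theorem mem_block {p j : ℕ} : p ∈ block j ↔ p / 2 = j := by
  simp only [block, mem_insert, mem_singleton]
  omega

theorem card_block (j : ℕ) : (block j).card = 2 := card_pair (by omega)

theorem block_injective : Function.Injective block := fun a b h => by
  have : 2 * a ∈ block b := h ▸ mem_block.mpr (by omega)
  rw [mem_block] at this
  omega

noncomputable def blockDist (p q : ℕ) : ℝ :=
  (if p = q then 0 else 1) + (if p / 2 = q / 2 then 0 else 1)

theorem isMetric_blockDist : IsMetric blockDist := by
  refine ⟨fun p q => ?_, fun p q => ?_, fun p q r => ?_⟩
  · unfold blockDist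
    split_ifs <;> norm_num <;> omega
  · simp only [blockDist, eq_comm]
  · unfold blockDist
    split_ifs <;> norm_num <;> omega

theorem blockDist_le_one_iff {p q : ℕ} : blockDist p q ≤ 1 ↔ p / 2 = q / 2 := by
  unfold blockDist
  split_ifs <;> norm_num <;> omega

theorem one_le_blockDist {p q : ℕ} (h : p ≠ q) : 1 ≤ blockDist p q := by
  rw [blockDist, if_neg h]
  split_ifs <;> norm_num

theorem med_block (j : ℕ) : med blockDist (block j) = 2 * j :=
  med_pair isMetric_blockDist (by omega)

section Blocks

variable {k : ℕ}

theorem isVoronoi_blocks (k : ℕ) :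
    IsVoronoi blockDist (fun _ => 1) 1 k 1 ((range k).image block) (range (2 * k)) := by
  simp only [IsVoronoi, IsPartition, forall_mem_image, mem_range]
  refine ⟨⟨fun j _ => ⟨2 * j, mem_block.mpr (by omega)⟩, ?_, ?_⟩, ?_, ?_⟩
  · ext p
    simp only [mem_sup, mem_image, mem_range, id]
    constructor
    · rintro ⟨_, ⟨j, hj, rfl⟩, hp⟩
      rw [mem_block] at hp
      omega
    · exact fun hp => ⟨block (p / 2), ⟨p / 2, by omega, rfl⟩, mem_block.mpr rfl⟩
  · intro i _ j _ hij
    refine disjoint_left.mpr fun p hi hj => hij ?_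
    rw [mem_block] at hi hj
    rw [← hi, ← hj]
  · rw [sum_const, card_image_of_injective _ block_injective, card_range]
    simp
  · intro j _ p hp
    rw [mem_block] at hp
    refine ⟨fun i _ hij => ?_, ?_⟩
    · have : i ≠ j := fun h => hij (h ▸ rfl)
      rw [med_block, med_block]
      exact (blockDist_le_one_iff.mpr (by omega)).trans (one_le_blockDist (by omega))
    · exact med_block j ▸ blockDist_le_one_iff.mpr (by omega)

theorem one_le_of_isVoronoi_blocks (hk : 0 < k) {ℓ : ℝ} {V : Finset (Finset ℕ)}
    (hV : IsVoronoi blockDist (fun _ => 1) 1 k ℓ V (range (2 * k))) : 1 ≤ ℓ := by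
  by_contra! hℓ
  have hlarge := hV.card_le_card_of_separated fun p _ q _ hpq =>
    hℓ.trans_le (one_le_blockDist hpq)
  have hsmall := hV.card_le_of_unit_cost
  rw [card_range] at hlarge
  omega

/-- With `ℓ = 1` every cell lies in a block, and at most `k` cells must cover `2k` points. -/
theorem eq_blocks_of_isVoronoi {V : Finset (Finset ℕ)}
    (hV : IsVoronoi blockDist (fun _ => 1) 1 k 1 V (range (2 * k))) :
    V = (range k).image block := by
  have hsub : ∀ v ∈ V, v ⊆ block (med blockDist v / 2) := fun v hv p hp =>
    mem_block.mpr (blockDist_le_one_iff.mp (hV.2.2 v hv p hp).2)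
  have hcard_le : ∀ v ∈ V, v.card ≤ 2 := fun v hv =>
    (card_le_card (hsub v hv)).trans (card_block _).le
  have htotal : 2 * k = ∑ v ∈ V, v.card := by
    rw [← hV.1.card_eq_sum_card, card_range]
  have hVcard := hV.card_le_of_unit_cost
  have hcard : ∀ v ∈ V, v.card = 2 := by
    by_contra! h
    obtain ⟨v, hv, hne⟩ := h
    have : ∑ v ∈ V, v.card < ∑ _v ∈ V, 2 :=
      sum_lt_sum hcard_le ⟨v, hv, (hcard_le v hv).lt_of_ne hne⟩
    rw [sum_const, smul_eq_mul] at this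
    omega
  have hVsub : V ⊆ (range k).image block := by
    intro v hv
    have hmed := hV.1.subset_of_mem hv (med_mem blockDist (hV.1.1 v hv))
    rw [mem_range] at hmed
    refine mem_image.mpr ⟨med blockDist v / 2, mem_range.mpr (by omega), ?_⟩
    exact (eq_of_subset_of_card_le (hsub v hv) (by rw [hcard v hv, card_block])).symm
  refine eq_of_subset_of_card_le hVsub ?_
  rw [card_image_of_injective _ block_injective, card_range]
  rw [sum_congr rfl hcard, sum_const, smul_eq_mul] at htotal
  omega

theorem kMedian_blocks (hk : 0 < k) {n : ℕ} {ℙ : Finset ℕ} {P : Profile n}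
    (hP : unionP P = range (2 * k)) :
    kMedian blockDist k n (fun _ => 1) 1 ℙ P = (range k).image (2 * ·) := by
  refine kMedian_eq_of_isLeast (ℓ := 1) ?_ fun V hV => ?_
  · rw [hP]
    exact ⟨⟨_, isVoronoi_blocks k⟩, fun ℓ ⟨V, hV⟩ => one_le_of_isVoronoi_blocks hk hV⟩
  rw [hP] at hV
  rw [eq_blocks_of_isVoronoi hV, image_image]
  exact image_congr fun j _ => med_block j

end Blocks

/-- Every median must be free, yet `0` is the median of any cell of `{0, 1}` containing it. -/
theorem not_isVoronoi_zero {δ : ℕ → ℕ → ℝ} (hδ : IsMetric δ) {B : ℕ} {ℓ : ℝ}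
    {V : Finset (Finset ℕ)} : ¬ IsVoronoi δ (fun p => if p = 0 then 1 else 0) B 0 ℓ V {0, 1} := by
  intro hV
  have hfree : ∀ v ∈ V, med δ v ≠ 0 := by
    have := hV.2.1
    rw [zero_mul, Nat.le_zero, sum_eq_zero_iff] at this
    exact fun v hv h => by simpa [h] using this v hv
  obtain ⟨v, hv, h0⟩ := hV.1.exists_mem (by simp : 0 ∈ ({0, 1} : Finset ℕ))
  have hsub := hV.1.subset_of_mem hv
  have hmed := med_mem δ ⟨0, h0⟩
  have h1 : med δ v = 1 := by
    have := hsub hmed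
    simp only [mem_insert, mem_singleton] at this
    exact this.resolve_left (hfree v hv)
  have hv01 : v = {0, 1} :=
    Subset.antisymm hsub (insert_subset h0 (singleton_subset_iff.mpr (h1 ▸ hmed)))
  exact hfree v hv (hv01 ▸ med_pair hδ zero_lt_one)

/-- For every `k`, the `k`-median shortlisting rule is not
representatively efficient: some metric, instance and profile witness a
representatively dominated outcome. -/
theorem kMedian_not_repEfficient :
    ∀ k : ℕ, ∃ δ : ℕ → ℕ → ℝ, IsMetric δ ∧
      ∃ (n : ℕ) (c : ℕ → ℕ) (B : ℕ) (ℙ : Finset ℕ) (P : Profile n),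
        (∀ p ∈ ℙ, c p ≤ B) ∧ (∀ j, P j ⊆ ℙ) ∧
        RepDominated c ℙ P (kMedian δ k n c B ℙ P) := by
  intro k
  refine ⟨blockDist, isMetric_blockDist, ?_⟩
  rcases k.eq_zero_or_pos with rfl | hk
  · refine ⟨1, fun p => if p = 0 then 1 else 0, 1, {0, 1}, fun _ => {0, 1},
      fun p _ => by dsimp only; split_ifs <;> omega, fun _ => subset_rfl, ?_⟩
    have hunion : unionP (n := 1) (fun _ => {0, 1}) = {0, 1} := sup_const univ_nonempty _
    rw [kMedian_eq_empty fun ℓ V => hunion ▸ not_isVoronoi_zero isMetric_blockDist]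
    exact repDominated_empty (b := 1) (by simp) rfl (i := 0) (by simp)
  · have hsub : ∀ j, ![range (2 * k), {1}] j ⊆ range (2 * k) := by
      simp [Fin.forall_fin_two]
      omega
    have hunion : unionP ![range (2 * k), {1}] = range (2 * k) :=
      le_antisymm (Finset.sup_le fun j _ => hsub j)
        (le_sup (f := ![range (2 * k), {1}]) (mem_univ 0))
    refine ⟨2, fun _ => 1, 1, range (2 * k), ![range (2 * k), {1}], fun _ _ => le_rfl, hsub, ?_⟩
    rw [kMedian_blocks hk hunion]
    have h1 : 1 < 2 * k := by omega
    refine repDominated_of_swap (a := 0) (b := 1) ?_ (by simp [hk]) (by simp) (by simp [h1]) le_rfl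
      (by simp [Fin.forall_fin_two, h1]) ⟨1, by simp⟩
    intro p
    simp only [mem_image, mem_range, forall_exists_index, and_imp]
    omega

end PB
end

section
/- Under both the overlap preference model and the cost preference model, and for each of the three manipulation types (pessimistic, optimistic, anticipative): if a pair ⟨R, F⟩ of a shortlisting rule and an allocation rule is R-FSSP with respect to that manipulation type, then it is U-FSSP with respect to that manipulation type. -/
open Finset

namespace PB

open scoped Classical

/-- A manipulation notion: `Succ n c B ℙ prefs P i Pi'` says that agent `i` gains by submitting
`Pi'` in place of her entry of `P`, as `SuccPess U R F`, `SuccOpt U R F` and `SuccAnt U R F` do. -/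
abbrev Manipulation :=
  ∀ n : ℕ, (ℕ → ℕ) → ℕ → Finset ℕ → (Fin n → ℕ → ℕ → Prop) → Profile n → Fin n → Finset ℕ → Prop

section Awareness

variable (Succ : Manipulation)

def RestrictedFSSP : Prop :=
  ∀ (n : ℕ) (c : ℕ → ℕ) (B : ℕ) (ℙ : Finset ℕ) (prefs : Fin n → ℕ → ℕ → Prop)
    (C P : Profile n) (i : Fin n) (Pi' : Finset ℕ),
    (∀ p ∈ ℙ, c p ≤ B) → (∀ j, IsStrictTotalOrder ℕ (prefs j)) →
    (∀ j, C j ⊆ ℙ) → (∀ j, P j ⊆ C j) → Pi' ⊆ C i →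
    ¬ Succ n c B ℙ prefs (Function.update P i (GREED c B (C i) (prefs i))) i Pi'

def UnrestrictedFSSP : Prop :=
  ∀ (n : ℕ) (c : ℕ → ℕ) (B : ℕ) (ℙ : Finset ℕ) (prefs : Fin n → ℕ → ℕ → Prop)
    (C P : Profile n) (i : Fin n) (Pi' : Finset ℕ),
    (∀ p ∈ ℙ, c p ≤ B) → (∀ j, IsStrictTotalOrder ℕ (prefs j)) →
    (∀ j, C j ⊆ ℙ) → (∀ j, P j ⊆ C j) → Pi' ⊆ C i ∪ unionP P →
    ¬ Succ n c B ℙ prefs (Function.update P i (GREED c B (C i ∪ unionP P) (prefs i))) i Pi'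

theorem unionP_subset_iff {n : ℕ} (P : Profile n) (S : Finset ℕ) :
    unionP P ⊆ S ↔ ∀ j, P j ⊆ S := by
  simp [unionP]

variable {Succ}

/-- The unrestricted setting with awareness profile `C` is the restricted one with awareness
`C j ∪ ⋃ P` for every agent `j`. -/
theorem RestrictedFSSP.unrestrictedFSSP (h : RestrictedFSSP Succ) : UnrestrictedFSSP Succ := by
  intro n c B ℙ prefs C P i Pi' hc hprefs hC hP hPi'
  have hunion : unionP P ⊆ ℙ := (unionP_subset_iff P ℙ).2 fun j => (hP j).trans (hC j)
  exact h n c B ℙ prefs (fun j => C j ∪ unionP P) P i Pi' hc hprefs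
    (fun j => union_subset (hC j) hunion)
    (fun j => (hP j).trans subset_union_left) hPi'

end Awareness

/-- Under both preference models and for each manipulation type,
R-FSSP implies U-FSSP. -/
theorem rfssp_implies_ufssp :
    ∀ U : PrefModel, (U = overlapU ∨ U = costU) →
    ∀ (R : ShortRule) (F : AllocRule),
      (R_FSSP_P U R F → U_FSSP_P U R F) ∧
      (R_FSSP_O U R F → U_FSSP_O U R F) ∧
      (R_FSSP_A U R F → U_FSSP_A U R F) :=
  fun U _ R F =>
    ⟨RestrictedFSSP.unrestrictedFSSP (Succ := SuccPess U R F),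
      RestrictedFSSP.unrestrictedFSSP (Succ := SuccOpt U R F),
      RestrictedFSSP.unrestrictedFSSP (Succ := SuccAnt U R F)⟩

end PB
end

section
/- Under both the overlap preference model and the cost preference model, no pair ⟨R, F⟩ consisting of a non-wasteful shortlisting rule R and an exhaustive allocation rule F is R-FSSP with respect to pessimistic manipulation (R-FSSP-P). -/
open Finset

namespace PB

open scoped Classical

/-! Take projects `0, 1, 2` of costs `1, 2, 1`, budget `2`, and two agents ranking projects by
index. Agent `0` is aware only of `1` and `2`, so her truthful proposal is `{1}`; agent `1`
proposes `{0}`. A non-wasteful rule then shortlists `{1}` or `{0, 1}`, and every exhaustive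
allocation of either shares at most one project with agent `0`'s ideal set `{0, 2}`. Proposing
`{2}` instead makes the union `{0, 2}` affordable, so it is the shortlist and every exhaustive
allocation funds all of it, whatever the approval ballots. -/

open Function

lemma Tfam_mem_or_eq_empty (𝔓 : Finset (Finset ℕ)) : Tfam 𝔓 ∈ 𝔓 ∨ Tfam 𝔓 = ∅ := by
  unfold Tfam
  split_ifs with h
  exacts [Or.inl h.choose_spec.1, Or.inr rfl]

lemma first_singleton (r : ℕ → ℕ → Prop) (p : ℕ) : first r {p} = p := by
  have hex : ∃ q ∈ ({p} : Finset ℕ), ∀ q' ∈ ({p} : Finset ℕ), q' ≠ q → r q q' :=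
    ⟨p, mem_singleton_self p, fun q' hq' hne => absurd (mem_singleton.mp hq') hne⟩
  rw [first, dif_pos hex]
  exact mem_singleton.mp hex.choose_spec.1

lemma first_lt_insert {p : ℕ} {P : Finset ℕ} (hp : ∀ q ∈ P, p < q) :
    first (· < ·) (insert p P) = p := by
  have hex : ∃ q ∈ insert p P, ∀ q' ∈ insert p P, q' ≠ q → q < q' :=
    ⟨p, mem_insert_self p P, fun q' hq' hne => hp q' ((mem_insert.mp hq').resolve_left hne)⟩
  rw [first, dif_pos hex]
  obtain ⟨hmem, hmin⟩ := hex.choose_spec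
  by_contra hne
  rcases mem_insert.mp hmem with h | h
  · exact hne h
  · exact lt_asymm (hp _ h) (hmin p (mem_insert_self p P) (Ne.symm hne))

lemma greedyAux_lt_insert (c : ℕ → ℕ) (k b : ℕ) {p : ℕ} {P : Finset ℕ} (hp : ∀ q ∈ P, p < q) :
    greedyAux c (· < ·) (k + 1) (insert p P) b =
      if c p ≤ b then insert p (greedyAux c (· < ·) k P (b - c p))
      else greedyAux c (· < ·) k P b := by
  have hpP : p ∉ P := fun h => lt_irrefl p (hp p h)
  simp only [greedyAux, insert_nonempty, if_true, first_lt_insert hp, erase_insert hpP]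

lemma greedyAux_singleton (c : ℕ → ℕ) (r : ℕ → ℕ → Prop) (k b p : ℕ) :
    greedyAux c r (k + 1) {p} b = if c p ≤ b then {p} else ∅ := by
  cases k <;> simp [greedyAux, first_singleton]

lemma ExhaustiveAlloc.eq_of_sum_le {c : ℕ → ℕ} {B : ℕ} {Sh A : Finset ℕ}
    (hA : ExhaustiveAlloc c B Sh A) (hSh : Sh.sum c ≤ B) : A = Sh := by
  obtain ⟨hsub, -, hmax⟩ := hA
  refine hsub.antisymm fun p hp => by_contra fun hpA => hmax p hp hpA ?_
  calc A.sum c + c p = (insert p A).sum c := by rw [sum_insert hpA, add_comm]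
    _ ≤ Sh.sum c := sum_le_sum_of_subset (insert_subset hp hsub)
    _ ≤ B := hSh

lemma update_subset {n : ℕ} {A : Profile n} {Sh b : Finset ℕ} (hA : ∀ j, A j ⊆ Sh)
    (hb : b ⊆ Sh) (i j : Fin n) : update A i b j ⊆ Sh := by
  rw [update_apply]
  split_ifs
  exacts [hb, hA j]

lemma Astar_subset {F : AllocRule} (hF : ExhaustiveRule F) (U : PrefModel)
    {n : ℕ} {c : ℕ → ℕ} {B : ℕ} {r : ℕ → ℕ → Prop} {Sh : Finset ℕ} {A : Profile n}
    {i : Fin n} (hA : ∀ j, A j ⊆ Sh) : Astar U n c B F r Sh A i ⊆ Sh := by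
  rcases Tfam_mem_or_eq_empty ((reachable n c B F Sh A i).filter fun X =>
      ∀ Y ∈ reachable n c B F Sh A i, U c (GREED c B Sh r) Y ≤ U c (GREED c B Sh r) X) with
    hmem | hempty
  · obtain ⟨b, hb, hbX⟩ := mem_image.mp (mem_filter.mp hmem).1
    rw [Astar, ← hbX]
    exact (hF n c B Sh _ (update_subset hA (mem_powerset.mp hb) i)).1
  · rw [Astar, hempty]
    exact empty_subset Sh

lemma exhaustiveAlloc_Fstar {F : AllocRule} (hF : ExhaustiveRule F)
    (U : PrefModel) {n : ℕ} {c : ℕ → ℕ} {B : ℕ} {r : ℕ → ℕ → Prop} {Sh : Finset ℕ}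
    {A : Profile n} {i : Fin n} (hA : ∀ j, A j ⊆ Sh) :
    ExhaustiveAlloc c B Sh (Fstar U n c B F r Sh A i) :=
  hF n c B Sh _ (update_subset hA (Astar_subset hF U hA) i)

def nonWastefulShortlists {n : ℕ} (c : ℕ → ℕ) (B : ℕ) (P : Profile n) : Finset (Finset ℕ) :=
  (unionP P).powerset.filter fun S => B ≤ S.sum c ∨ S = unionP P

lemma shortlist_mem_nonWastefulShortlists {R : ShortRule} (hR : IsShortRule R)
    (hNW : NonWasteful R) {n : ℕ} {c : ℕ → ℕ} {B : ℕ} {ℙ : Finset ℕ} {P : Profile n}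
    (hc : ∀ p ∈ ℙ, c p ≤ B) (hP : ∀ j, P j ⊆ ℙ) :
    R n c B ℙ P ∈ nonWastefulShortlists c B P :=
  mem_filter.mpr ⟨mem_powerset.mpr (hR n c B ℙ P hP), hNW n c B ℙ P hc hP⟩

lemma succPess_of_forall_lt {U : PrefModel} {R : ShortRule} {F : AllocRule} {n : ℕ}
    {c : ℕ → ℕ} {B : ℕ} {ℙ : Finset ℕ} {prefs : Fin n → ℕ → ℕ → Prop} {P : Profile n}
    {i : Fin n} {Pi' : Finset ℕ}
    (h : let Sh := R n c B ℙ P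
      let Sh' := R n c B ℙ (update P i Pi')
      let tp := GREED c B (Sh ∪ Sh') (prefs i)
      ∀ A A' : Profile n, (∀ j, A j ⊆ Sh) → (∀ j, A' j ⊆ Sh') →
        U c tp (Fstar U n c B F (prefs i) Sh A i) <
          U c tp (Fstar U n c B F (prefs i) Sh' A' i)) :
    SuccPess U R F n c B ℙ prefs P i Pi' :=
  ⟨fun A A' hA hA' => (h A A' hA hA').le,
    ⟨fun _ => ∅, fun _ => ∅, fun _ => empty_subset _, fun _ => empty_subset _,
      h _ _ (fun _ => empty_subset _) (fun _ => empty_subset _)⟩⟩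

lemma unionP_fin_two (P : Profile 2) : unionP P = P 0 ∪ P 1 := by
  simp [unionP, Fin.univ_succ, sup_insert, sup_eq_union]

section Counterexample

def exCost : ℕ → ℕ := fun p => if p = 1 then 2 else 1

lemma exCost_le_two : ∀ p ∈ ({0, 1, 2} : Finset ℕ), exCost p ≤ 2 := by decide

lemma GREED_exCost_one_two : GREED exCost 2 {1, 2} (· < ·) = {1} := by
  rw [GREED, card_pair (by decide), greedyAux_lt_insert _ _ _ (by decide), greedyAux_singleton]
  decide

lemma GREED_exCost_zero_one_two : GREED exCost 2 {0, 1, 2} (· < ·) = {0, 2} := by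
  rw [GREED, show ({0, 1, 2} : Finset ℕ).card = 2 + 1 from rfl,
    greedyAux_lt_insert _ _ _ (by decide), greedyAux_lt_insert _ _ _ (by decide)]
  simp only [greedyAux_singleton]
  decide

lemma nonWastefulShortlists_truthful :
    nonWastefulShortlists exCost 2 (![{1}, {0}] : Profile 2) = {{1}, {0, 1}} := by
  rw [nonWastefulShortlists, unionP_fin_two]
  decide

lemma nonWastefulShortlists_manipulated :
    nonWastefulShortlists exCost 2 (![{2}, {0}] : Profile 2) = {{0, 2}} := by
  rw [nonWastefulShortlists, unionP_fin_two]
  decide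

lemma shortlist_truthful {R : ShortRule} (hR : IsShortRule R) (hNW : NonWasteful R) :
    R 2 exCost 2 {0, 1, 2} ![{1}, {0}] ∈ ({{1}, {0, 1}} : Finset (Finset ℕ)) :=
  nonWastefulShortlists_truthful ▸ shortlist_mem_nonWastefulShortlists hR hNW exCost_le_two
    (by decide : ∀ j, (![{1}, {0}] : Profile 2) j ⊆ {0, 1, 2})

lemma shortlist_manipulated {R : ShortRule} (hR : IsShortRule R) (hNW : NonWasteful R) :
    R 2 exCost 2 {0, 1, 2} ![{2}, {0}] = {0, 2} :=
  mem_singleton.mp <| nonWastefulShortlists_manipulated ▸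
    shortlist_mem_nonWastefulShortlists hR hNW exCost_le_two
      (by decide : ∀ j, (![{2}, {0}] : Profile 2) j ⊆ {0, 1, 2})

lemma union_zero_two_of_truthful :
    ∀ Sh ∈ ({{1}, {0, 1}} : Finset (Finset ℕ)), Sh ∪ {0, 2} = {0, 1, 2} := by
  decide

lemma utility_exhaustiveAlloc_le_one {U : PrefModel} (hU : U = overlapU ∨ U = costU) :
    ∀ Sh ∈ ({{1}, {0, 1}} : Finset (Finset ℕ)), ∀ X ∈ Sh.powerset,
      ExhaustiveAlloc exCost 2 Sh X → U exCost {0, 2} X ≤ 1 := by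
  simp only [ExhaustiveAlloc]
  rcases hU with rfl | rfl <;> decide

end Counterexample

/-- Under both preference models, no pair of a non-wasteful
shortlisting rule and an exhaustive allocation rule is R-FSSP-P. -/
theorem no_nonWasteful_exhaustive_rfsspP :
    ∀ U : PrefModel, (U = overlapU ∨ U = costU) →
    ∀ (R : ShortRule) (F : AllocRule),
      IsShortRule R → NonWasteful R → ExhaustiveRule F → ¬ R_FSSP_P U R F := by
  intro U hU R F hR hNW hF hFSSP
  refine hFSSP 2 exCost 2 {0, 1, 2} (fun _ => (· < ·)) ![{1, 2}, {0}] ![∅, {0}] 0 {2}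
    exCost_le_two (fun _ => inferInstance) (by decide) (by decide) (by decide) ?_
  rw [show ((![{1, 2}, {0}] : Profile 2) 0) = {1, 2} from rfl, GREED_exCost_one_two,
    show update (![∅, {0}] : Profile 2) 0 {1} = ![{1}, {0}] from Fin.update_cons_zero _ _ _]
  refine succPess_of_forall_lt fun A A' hA hA' => ?_
  rw [show update (![{1}, {0}] : Profile 2) 0 {2} = ![{2}, {0}] from Fin.update_cons_zero _ _ _,
    shortlist_manipulated hR hNW] at hA' ⊢
  have hSh := shortlist_truthful hR hNW
  generalize R 2 exCost 2 {0, 1, 2} ![{1}, {0}] = Sh at hSh hA ⊢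
  have hbefore := exhaustiveAlloc_Fstar hF U (c := exCost) (B := 2) (r := (· < ·)) (i := 0) hA
  have hafter := exhaustiveAlloc_Fstar hF U (c := exCost) (B := 2) (r := (· < ·)) (i := 0) hA'
  rw [union_zero_two_of_truthful Sh hSh, GREED_exCost_zero_one_two,
    hafter.eq_of_sum_le (by decide)]
  refine (utility_exhaustiveAlloc_le_one hU Sh hSh _ (mem_powerset.mpr hbefore.1)
    hbefore).trans_lt ?_
  rcases hU with rfl | rfl <;> decide

end PB
end

section
/- The approval-maximising rule (with the canonical lexicographic tie-breaking rule T) is strategyproof over the class of unit-cost allocation instances, under both the cost preference model and the overlap preference model: for every allocation instance I = ⟨𝒫, c, B⟩ in which all projects have equal cost, every approval profile A, and every agent i, F(I, (A_{-i}, top_i(𝒫))) ⪰_{top_i(𝒫)} F(I, A), where F is the approval-maximising rule. -/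
open Finset

namespace PB

open scoped Classical

/-!
Let `W` and `W'` be the outcomes before and after agent `i` reports her ideal set `T`, and
suppose `W` met `T` in more projects than `W'`. Pick `p ∈ W ∩ T` outside `W'`. The rule is
exhaustive, so `W'` has no room for `p`; with unit costs this forces `|W| ≤ |W'|`, hence some
`q ∈ W'` lies outside both `T` and `W`. Exchanging `p` and `q` in either optimum is feasible,
so optimality gives `score(q) ≤ score(p)` before and `score'(p) ≤ score'(q)` after the report;
since reporting `T` can only raise the score of `p ∈ T` and lower that of `q ∉ T`, all four
scores coincide. The lexicographic tie-breaking then demands both `p < q` and `q < p`.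
-/

lemma exists_eq_const_of_forall_eq {c : ℕ → ℕ} {Sh : Finset ℕ}
    (hc : ∀ p ∈ Sh, ∀ q ∈ Sh, c p = c q) : ∃ γ, ∀ p ∈ Sh, c p = γ := by
  rcases Sh.eq_empty_or_nonempty with rfl | ⟨p₀, hp₀⟩
  · exact ⟨0, by simp⟩
  · exact ⟨c p₀, fun p hp => hc p hp p₀ hp₀⟩

lemma sum_eq_card_mul_of_subset {c : ℕ → ℕ} {γ : ℕ} {Sh S : Finset ℕ}
    (hγ : ∀ p ∈ Sh, c p = γ) (hS : S ⊆ Sh) : S.sum c = S.card * γ :=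
  sum_const_nat fun x hx => hγ x (hS hx)

lemma sum_insert_erase_add {α M : Type*} [DecidableEq α] [AddCommMonoid M] {s : Finset α}
    {p q : α} (hp : p ∈ s) (hq : q ∉ s) (g : α → M) :
    (insert q (s.erase p)).sum g + g p = s.sum g + g q := by
  rw [sum_insert fun h => hq (mem_of_mem_erase h), add_assoc, sum_erase_add _ _ hp, add_comm]

lemma enc_insert {S : Finset ℕ} {p : ℕ} (hp : p ∉ S) :
    enc (insert p S) = enc S + (1 / 2 : ℚ) ^ p := by
  rw [enc, enc, sum_insert hp, add_comm]

lemma enc_insert_erase_add {S : Finset ℕ} {p q : ℕ} (hp : p ∈ S) (hq : q ∉ S) :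
    enc (insert q (S.erase p)) + (1 / 2 : ℚ) ^ p = enc S + (1 / 2 : ℚ) ^ q :=
  sum_insert_erase_add hp hq _

lemma Tfam_spec {𝔓 : Finset (Finset ℕ)} (h𝔓 : 𝔓.Nonempty) :
    Tfam 𝔓 ∈ 𝔓 ∧ ∀ Q ∈ 𝔓, enc Q ≤ enc (Tfam 𝔓) := by
  obtain ⟨P, hP, hmax⟩ := exists_max_image 𝔓 enc h𝔓
  have h : ∃ P ∈ 𝔓, ∀ Q ∈ 𝔓, enc Q ≤ enc P := ⟨P, hP, hmax⟩
  rw [Tfam, dif_pos h]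
  exact h.choose_spec

section approvalMax

variable (n : ℕ) (c : ℕ → ℕ) (B : ℕ) (Sh : Finset ℕ) (A : Profile n)

lemma approvalMax_spec :
    approvalMax n c B Sh A ⊆ Sh ∧ (approvalMax n c B Sh A).sum c ≤ B ∧
    (∀ S ⊆ Sh, S.sum c ≤ B →
      S.sum (appScore A) ≤ (approvalMax n c B Sh A).sum (appScore A)) ∧
    (∀ S ⊆ Sh, S.sum c ≤ B →
      (approvalMax n c B Sh A).sum (appScore A) ≤ S.sum (appScore A) →
      enc S ≤ enc (approvalMax n c B Sh A)) := by
  have hne : (Sh.powerset.filter fun S => S.sum c ≤ B ∧ ∀ S' ∈ Sh.powerset,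
      S'.sum c ≤ B → S'.sum (appScore A) ≤ S.sum (appScore A)).Nonempty := by
    obtain ⟨S₀, hS₀, hmax⟩ := exists_max_image (Sh.powerset.filter fun S => S.sum c ≤ B)
      (fun S => S.sum (appScore A)) ⟨∅, by simp⟩
    obtain ⟨hS₀Sh, hS₀B⟩ := mem_filter.1 hS₀
    exact ⟨S₀, mem_filter.2 ⟨hS₀Sh, hS₀B, fun S hS hSB => hmax S (mem_filter.2 ⟨hS, hSB⟩)⟩⟩
  obtain ⟨hmem, hlex⟩ := Tfam_spec hne
  obtain ⟨hSh, hB, hmax⟩ := mem_filter.1 hmem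
  refine ⟨mem_powerset.1 hSh, hB, fun S hS hSB => hmax S (mem_powerset.2 hS) hSB,
    fun S hS hSB hscore => hlex S ?_⟩
  exact mem_filter.2 ⟨mem_powerset.2 hS, hSB, fun S' hS' hS'B => (hmax S' hS' hS'B).trans hscore⟩

/-- Adding a project never lowers the total approval score but raises the encoding, so the
lexicographic tie-breaking leaves no affordable project out. -/
lemma approvalMax_exhaustive : ExhaustiveAlloc c B Sh (approvalMax n c B Sh A) := by
  obtain ⟨hsub, hB, _, hlex⟩ := approvalMax_spec n c B Sh A
  refine ⟨hsub, hB, fun p hp hpW hroom => ?_⟩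
  have hle := hlex (insert p _) (insert_subset hp hsub) (by rwa [sum_insert hpW, add_comm])
    (by rw [sum_insert hpW]; exact Nat.le_add_left _ _)
  rw [enc_insert hpW] at hle
  have : (0 : ℚ) < (1 / 2) ^ p := by positivity
  linarith

variable {n c B Sh A} in
lemma approvalMax_exchange {p q : ℕ} (hp : p ∈ approvalMax n c B Sh A) (hq : q ∈ Sh)
    (hqW : q ∉ approvalMax n c B Sh A) (hcost : c q ≤ c p) :
    appScore A q ≤ appScore A p ∧ (appScore A q = appScore A p → p < q) := by
  obtain ⟨hsub, hB, hmax, hlex⟩ := approvalMax_spec n c B Sh A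
  set W := approvalMax n c B Sh A
  have hS : insert q (W.erase p) ⊆ Sh := insert_subset hq ((erase_subset p W).trans hsub)
  have hSB : (insert q (W.erase p)).sum c ≤ B := by
    have := sum_insert_erase_add hp hqW c
    omega
  have hscore := sum_insert_erase_add hp hqW (appScore A)
  have hq_le_p : appScore A q ≤ appScore A p := by
    have := hmax _ hS hSB
    omega
  refine ⟨hq_le_p, fun heq => ?_⟩
  have henc := hlex _ hS hSB (by omega)
  have hpow : (1 / 2 : ℚ) ^ q ≤ (1 / 2) ^ p := by
    linarith [enc_insert_erase_add hp hqW]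
  have hpq : p ≤ q := (pow_le_pow_iff_right_of_lt_one₀ (by norm_num) (by norm_num)).1 hpow
  exact lt_of_le_of_ne hpq fun h => hqW (h ▸ hp)

end approvalMax

lemma appScore_le_appScore_update {n : ℕ} (A : Profile n) (i : Fin n) {b : Finset ℕ} {x : ℕ}
    (hx : x ∈ b) : appScore A x ≤ appScore (Function.update A i b) x := by
  refine card_le_card fun j => ?_
  simp only [mem_filter, mem_univ, true_and]
  rcases eq_or_ne j i with rfl | hj
  · simp [hx]
  · simp [Function.update_of_ne hj]

lemma appScore_update_le_appScore {n : ℕ} (A : Profile n) (i : Fin n) {b : Finset ℕ} {x : ℕ}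
    (hx : x ∉ b) : appScore (Function.update A i b) x ≤ appScore A x := by
  refine card_le_card fun j => ?_
  simp only [mem_filter, mem_univ, true_and]
  rcases eq_or_ne j i with rfl | hj
  · simp [hx]
  · simp [Function.update_of_ne hj]

lemma card_approvalMax_inter_le_update {n : ℕ} {c : ℕ → ℕ} {B γ : ℕ} {Sh : Finset ℕ}
    (hγ : ∀ p ∈ Sh, c p = γ) (A : Profile n) (i : Fin n) (T : Finset ℕ) :
    (approvalMax n c B Sh A ∩ T).card
      ≤ (approvalMax n c B Sh (Function.update A i T) ∩ T).card := by
  set W := approvalMax n c B Sh A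
  set W' := approvalMax n c B Sh (Function.update A i T)
  obtain ⟨hWSh, hWB, -⟩ := approvalMax_exhaustive n c B Sh A
  obtain ⟨hW'Sh, -, hW'full⟩ := approvalMax_exhaustive n c B Sh (Function.update A i T)
  by_contra! hlt
  obtain ⟨p, hpWT, hpW'T⟩ := exists_mem_notMem_of_card_lt_card hlt
  obtain ⟨hpW, hpT⟩ := mem_inter.1 hpWT
  have hpW' : p ∉ W' := fun h => hpW'T (mem_inter.2 ⟨h, hpT⟩)
  have hcard : W.card ≤ W'.card := by
    have hroom := hW'full p (hWSh hpW) hpW'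
    rw [sum_eq_card_mul_of_subset hγ hWSh] at hWB
    rw [sum_eq_card_mul_of_subset hγ hW'Sh, hγ p (hWSh hpW), ← Nat.succ_mul] at hroom
    exact Nat.lt_succ_iff.1 (Nat.lt_of_mul_lt_mul_right (hWB.trans_lt (not_le.1 hroom)))
  obtain ⟨q, hqW'T, hqWT⟩ : ∃ q ∈ W' \ T, q ∉ W \ T := by
    refine exists_mem_notMem_of_card_lt_card ?_
    have := card_sdiff_add_card_inter W T
    have := card_sdiff_add_card_inter W' T
    omega
  obtain ⟨hqW', hqT⟩ := mem_sdiff.1 hqW'T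
  have hqW : q ∉ W := fun h => hqWT (mem_sdiff.2 ⟨h, hqT⟩)
  have hpq : c p = c q := (hγ p (hWSh hpW)).trans (hγ q (hW'Sh hqW')).symm
  obtain ⟨hle, hlt_of_eq⟩ := approvalMax_exchange hpW (hW'Sh hqW') hqW hpq.ge
  obtain ⟨hle', hlt_of_eq'⟩ := approvalMax_exchange hqW' (hWSh hpW) hpW' hpq.le
  have hp_up := appScore_le_appScore_update A i hpT
  have hq_down := appScore_update_le_appScore A i hqT
  exact lt_asymm (hlt_of_eq (by omega)) (hlt_of_eq' (by omega))

/-- The approval-maximising rule (canonical tie-breaking) is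
strategyproof over unit-cost instances, under both preference models. -/
theorem approvalMax_SP_unit :
    ∀ U : PrefModel, (U = overlapU ∨ U = costU) →
    ∀ (n : ℕ) (c : ℕ → ℕ) (B : ℕ) (Sh : Finset ℕ) (A : Profile n)
      (ri : ℕ → ℕ → Prop) (i : Fin n),
      (∀ p ∈ Sh, c p ≤ B) → (∀ p ∈ Sh, ∀ q ∈ Sh, c p = c q) →
      IsStrictTotalOrder ℕ ri → (∀ j, A j ⊆ Sh) →
      U c (GREED c B Sh ri) (approvalMax n c B Sh A) ≤
        U c (GREED c B Sh ri) (approvalMax n c B Sh (Function.update A i (GREED c B Sh ri))) := by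
  intro U hU n c B Sh A ri i _ hc _ _
  obtain ⟨γ, hγ⟩ := exists_eq_const_of_forall_eq hc
  have hcard := card_approvalMax_inter_le_update (B := B) hγ A i (GREED c B Sh ri)
  rcases hU with rfl | rfl
  · exact hcard
  · simp only [costU]
    rw [sum_eq_card_mul_of_subset hγ (inter_subset_left.trans (approvalMax_spec n c B Sh A).1),
      sum_eq_card_mul_of_subset hγ (inter_subset_left.trans (approvalMax_spec n c B Sh _).1)]
    exact Nat.mul_le_mul_right γ hcard

end PB
end
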